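/- arXiv:1411.2024 — 5 statements merged into one kernel-verified Lean document; each statement's English description precedes it below -/
import Mathlib

section
/- For an irreducible recurrent Markov chain on a countable state space E, every nonnegative harmonic function is constant. -/
open MeasureTheory ENNReal
open scoped Classical NNReal

/-- A (time-homogeneous) Markov chain on a countable state space `E`, given by its
transition probabilities `p` and the family of path-space laws `P x` (the chain started
at `x`), characterized by its finite-dimensional distributions. -/
structure MC (E : Type*) [MeasurableSpace E] where
  p : E → E → ℝ≥0∞
  P : E → Measure (ℕ → E)
  prob : ∀ x, IsProbabilityMeasure (P x)
  stochastic : ∀ x, ∑' y, p x y = 1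
  fdd : ∀ (x : E) (n : ℕ) (xs : Fin (n + 1) → E),
    P x {ω | ∀ i : Fin (n + 1), ω i = xs i}
      = (if xs 0 = x then 1 else 0) * ∏ i : Fin n, p (xs i.castSucc) (xs i.succ)

/-- Irreducibility: every state is reachable from every state with positive probability. -/
def MC.Irreducible {E : Type*} [MeasurableSpace E] (M : MC E) : Prop :=
  ∀ x y : E, ∃ n : ℕ, 0 < M.P x {ω | ω n = y}

/-- Recurrence: started from any state, the chain returns to that state infinitely often
almost surely. -/
def MC.Recurrent {E : Type*} [MeasurableSpace E] (M : MC E) : Prop :=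
  ∀ x : E, M.P x {ω | ∀ N : ℕ, ∃ n, N ≤ n ∧ ω n = x} = 1

/-!
Write `Pⁿ` for the `n`-step transition kernel. Recurrence and irreducibility make the Green
function `∑ₙ Pⁿ(x, y)` infinite. If `g` is superharmonic and finite at `x`, its defect
`h = g - Pg ≥ 0` telescopes to `∑_{k<n} Pᵏh(x) ≤ g(x)`, which an infinite Green function
only allows for `h = 0`: `g` is harmonic. This applies to `g = min ψ (ψ x)`. Then
`Pⁿg(x) = ψ(x) = Pⁿψ(x)` with `g ≤ ψ`, so `g = ψ` wherever the chain can go from `x`,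
i.e. `ψ ≤ ψ x` everywhere; by symmetry `ψ` is constant.
-/

namespace MC

variable {E : Type*} [MeasurableSpace E] (M : MC E)

noncomputable def nStep : ℕ → E → E → ℝ≥0∞
  | 0, x, y => if x = y then 1 else 0
  | n + 1, x, y => ∑' z, nStep n x z * M.p z y

def Harmonic (f : E → ℝ≥0∞) : Prop :=
  ∀ x, ∑' y, M.p x y * f y = f x

def Superharmonic (f : E → ℝ≥0∞) : Prop :=
  ∀ x, ∑' y, M.p x y * f y ≤ f x

lemma nStep_add (m n : ℕ) (x y : E) :
    M.nStep (m + n) x y = ∑' z, M.nStep m x z * M.nStep n z y := by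
  induction n generalizing y with
  | zero => simp [nStep]
  | succ n ih =>
    calc M.nStep (m + n + 1) x y
        = ∑' w, (∑' z, M.nStep m x z * M.nStep n z w) * M.p w y := by simp only [nStep, ih]
      _ = ∑' z, M.nStep m x z * ∑' w, M.nStep n z w * M.p w y := by
        simp_rw [← ENNReal.tsum_mul_right, ← ENNReal.tsum_mul_left, mul_assoc]
        exact ENNReal.tsum_comm
      _ = ∑' z, M.nStep m x z * M.nStep (n + 1) z y := rfl

lemma tsum_nStep_succ_mul (n : ℕ) (x : E) (f : E → ℝ≥0∞) :
    ∑' y, M.nStep (n + 1) x y * f y = ∑' z, M.nStep n x z * ∑' y, M.p z y * f y := by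
  simp_rw [nStep, ← ENNReal.tsum_mul_right, ← ENNReal.tsum_mul_left, mul_assoc]
  exact ENNReal.tsum_comm

lemma sum_range_tsum_nStep_mul_add {g h : E → ℝ≥0∞}
    (hgh : ∀ x, h x + ∑' y, M.p x y * g y = g x) (n : ℕ) (x : E) :
    ∑ k ∈ Finset.range n, ∑' y, M.nStep k x y * h y + ∑' y, M.nStep n x y * g y = g x := by
  induction n with
  | zero => simp [nStep]
  | succ n ih =>
    rw [Finset.sum_range_succ, add_assoc, tsum_nStep_succ_mul, ← ENNReal.tsum_add]
    simp_rw [← mul_add, hgh]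
    exact ih

lemma nStep_eq_tsum_paths (n : ℕ) (x y : E) :
    M.nStep n x y = ∑' xs : Fin n → E, (if (Fin.snoc xs y : Fin (n + 1) → E) 0 = x then 1 else 0) *
      ∏ i : Fin n, M.p ((Fin.snoc xs y : Fin (n + 1) → E) i.castSucc)
        ((Fin.snoc xs y : Fin (n + 1) → E) i.succ) := by
  induction n generalizing y with
  | zero =>
    rw [tsum_fintype, Fintype.sum_unique]
    simp [nStep, eq_comm]
    rfl
  | succ n ih =>
    rw [← (Fin.snocEquiv fun _ => E).tsum_eq, ENNReal.tsum_prod', nStep]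
    refine tsum_congr fun z => ?_
    simp [ih, Fin.prod_univ_castSucc, ← ENNReal.tsum_mul_right, Fin.succ_castSucc,
      -Fin.castSucc_succ]

variable {M}

lemma harmonic_const (c : ℝ≥0∞) : M.Harmonic fun _ => c := fun x => by
  rw [ENNReal.tsum_mul_right, M.stochastic x, one_mul]

lemma Harmonic.superharmonic {f : E → ℝ≥0∞} (hf : M.Harmonic f) : M.Superharmonic f :=
  fun x => (hf x).le

lemma Superharmonic.min {f g : E → ℝ≥0∞} (hf : M.Superharmonic f) (hg : M.Superharmonic g) :
    M.Superharmonic fun x => min (f x) (g x) := fun x =>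
  le_min ((ENNReal.tsum_le_tsum fun y => by gcongr; exact min_le_left _ _).trans (hf x))
    ((ENNReal.tsum_le_tsum fun y => by gcongr; exact min_le_right _ _).trans (hg x))

lemma Harmonic.tsum_nStep_mul {f : E → ℝ≥0∞} (hf : M.Harmonic f) (n : ℕ) (x : E) :
    ∑' y, M.nStep n x y * f y = f x := by
  induction n with
  | zero => simp [nStep]
  | succ n ih => rw [tsum_nStep_succ_mul]; exact (tsum_congr fun z => by rw [hf z]).trans ih

lemma tsum_nStep (n : ℕ) (x : E) : ∑' y, M.nStep n x y = 1 := by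
  simpa using (harmonic_const (M := M) 1).tsum_nStep_mul n x

lemma nStep_ne_top (n : ℕ) (x y : E) : M.nStep n x y ≠ ⊤ :=
  ne_top_of_le_ne_top one_ne_top (tsum_nStep n x ▸ ENNReal.le_tsum y)

lemma Superharmonic.harmonic_of_tsum_nStep_eq_top {g : E → ℝ≥0∞} (hg : M.Superharmonic g)
    {x : E} (hx : g x ≠ ⊤) (hG : ∀ y, ∑' n, M.nStep n x y = ⊤) : M.Harmonic g := by
  set h := fun z => g z - ∑' y, M.p z y * g y
  have hgh : ∀ z, h z + ∑' y, M.p z y * g y = g z := fun z => tsub_add_cancel_of_le (hg z)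
  have h_eq_zero (y : E) : h y = 0 := by
    by_contra hy
    have hle : ∑' k, M.nStep k x y * h y ≤ g x := ENNReal.tsum_le_of_sum_range_le fun n =>
      calc ∑ k ∈ Finset.range n, M.nStep k x y * h y
          ≤ ∑ k ∈ Finset.range n, ∑' w, M.nStep k x w * h w :=
            Finset.sum_le_sum fun k _ => ENNReal.le_tsum (f := fun w => M.nStep k x w * h w) y
        _ ≤ g x := le_self_add.trans (M.sum_range_tsum_nStep_mul_add hgh n x).le
    rw [ENNReal.tsum_mul_right, hG y, ENNReal.top_mul hy] at hle
    exact hx (top_le_iff.mp hle)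
  intro z
  simpa [h_eq_zero z] using hgh z

lemma Harmonic.eq_of_le {f g : E → ℝ≥0∞} (hf : M.Harmonic f) (hg : M.Harmonic g)
    (hfg : ∀ z, f z ≤ g z) {n : ℕ} {x y : E} (hx : f x = g x) (hgx : g x ≠ ⊤)
    (hn : M.nStep n x y ≠ 0) : f y = g y := by
  by_contra hne
  have hlt : ∑' z, M.nStep n x z * f z < ∑' z, M.nStep n x z * g z :=
    ENNReal.tsum_lt_tsum (by rwa [hf.tsum_nStep_mul, hx]) (fun z => by gcongr; exact hfg z)
      (ENNReal.mul_lt_mul_right hn (nStep_ne_top n x y) ((hfg y).lt_of_ne hne))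
  rw [hf.tsum_nStep_mul, hg.tsum_nStep_mul, hx] at hlt
  exact lt_irrefl _ hlt

section Countable

variable [Countable E]

-- Only a bound: cylinders need not be measurable for an arbitrary σ-algebra on `E`,
-- but countable subadditivity of the outer measure suffices.
lemma measure_eval_eq_le_nStep (x y : E) (n : ℕ) : M.P x {ω | ω n = y} ≤ M.nStep n x y := by
  have hcover : {ω : ℕ → E | ω n = y} ⊆
      ⋃ xs : Fin n → E, {ω | ∀ i : Fin (n + 1), ω i = (Fin.snoc xs y : Fin (n + 1) → E) i} := by
    intro ω hω
    exact Set.mem_iUnion.2 ⟨fun i => ω i, Fin.lastCases (by simpa using hω) fun i => by simp⟩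
  calc M.P x {ω | ω n = y}
      ≤ ∑' xs : Fin n → E,
          M.P x {ω | ∀ i : Fin (n + 1), ω i = (Fin.snoc xs y : Fin (n + 1) → E) i} :=
        (measure_mono hcover).trans (measure_iUnion_le _)
    _ = M.nStep n x y := by simp only [M.fdd, nStep_eq_tsum_paths]

lemma Irreducible.exists_nStep_pos (hirr : M.Irreducible) (x y : E) : ∃ n, 0 < M.nStep n x y :=
  (hirr x y).imp fun n hn => hn.trans_le (measure_eval_eq_le_nStep x y n)

lemma Recurrent.tsum_nStep_self_eq_top (hrec : M.Recurrent) (x : E) :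
    ∑' n, M.nStep n x x = ⊤ := by
  by_contra hfin
  have htail (N : ℕ) : 1 ≤ ∑' k, M.nStep (k + N) x x :=
    calc 1 = M.P x {ω | ∀ N, ∃ n, N ≤ n ∧ ω n = x} := (hrec x).symm
      _ ≤ M.P x (⋃ k : ℕ, {ω | ω (k + N) = x}) := measure_mono fun ω hω => by
        obtain ⟨n, hn, hnx⟩ := hω N
        exact Set.mem_iUnion.2 ⟨n - N, by rwa [Nat.sub_add_cancel hn]⟩
      _ ≤ ∑' k, M.P x {ω | ω (k + N) = x} := measure_iUnion_le _
      _ ≤ ∑' k, M.nStep (k + N) x x :=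
        ENNReal.tsum_le_tsum fun k => measure_eval_eq_le_nStep x x (k + N)
  have := ge_of_tendsto (ENNReal.tendsto_sum_nat_add _ hfin) (Filter.Eventually.of_forall htail)
  simp at this

lemma tsum_nStep_eq_top (hirr : M.Irreducible) (hrec : M.Recurrent) (x y : E) :
    ∑' n, M.nStep n x y = ⊤ := by
  obtain ⟨m, hm⟩ := hirr.exists_nStep_pos x y
  refine top_le_iff.mp ?_
  calc ⊤ = (∑' k, M.nStep k x x) * M.nStep m x y := by
        rw [hrec.tsum_nStep_self_eq_top, ENNReal.top_mul hm.ne']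
    _ = ∑' k, M.nStep k x x * M.nStep m x y := ENNReal.tsum_mul_right.symm
    _ ≤ ∑' k, M.nStep (k + m) x y :=
      ENNReal.tsum_le_tsum fun k => by rw [nStep_add]; exact ENNReal.le_tsum x
    _ ≤ ∑' n, M.nStep n x y := tsum_comp_le_tsum_of_injective (add_left_injective m) _

end Countable

end MC

/-- For an irreducible recurrent Markov chain on a countable state space, every
nonnegative harmonic function is constant. -/
theorem nonneg_harmonic_constant_of_irreducible_recurrent
    {E : Type*} [Countable E] [MeasurableSpace E]
    (M : MC E) (hirr : M.Irreducible) (hrec : M.Recurrent)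
    (ψ : E → ℝ≥0) (hharm : ∀ x : E, ∑' y, M.p x y * (ψ y : ℝ≥0∞) = (ψ x : ℝ≥0∞)) :
    ∀ x y : E, ψ x = ψ y := by
  have hψ : M.Harmonic fun z => (ψ z : ℝ≥0∞) := hharm
  have hle (x y : E) : ψ y ≤ ψ x := by
    have hmin : M.Harmonic fun z => min (ψ z : ℝ≥0∞) (ψ x) :=
      (hψ.superharmonic.min (MC.harmonic_const _).superharmonic).harmonic_of_tsum_nStep_eq_top
        (by simp) (MC.tsum_nStep_eq_top hirr hrec x)
    obtain ⟨n, hn⟩ := hirr.exists_nStep_pos x y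
    have hψ_eq := hmin.eq_of_le hψ (fun z => min_le_left _ _) (min_self _) coe_ne_top hn.ne'
    exact_mod_cast min_eq_left_iff.mp hψ_eq
  exact fun x y => le_antisymm (hle y x) (hle x y)
end

section
/- For an irreducible recurrent Markov chain, the Green function of the chain killed just before the first return time to x0 is finite: G_{x0}(x,y) := E_x[L^y_{T'_{x0}-1}] < ∞ for all x, y ∈ E, where T'_{x0} = inf{n ≥ 1 : X_n = x0}. Moreover G_{x0}(x0, y) > 0 for all y ∈ E. -/
open MeasureTheory ENNReal
open scoped Classical NNReal

/-- Green function of the chain killed just before the first return time `T'_{x0}`: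
`G_{x0}(x,y) = E_x[L^y_{T'_{x0} - 1}]`, the expected number of visits to `y` at times `n`
such that `x0` has not been visited at any time `1 ≤ k ≤ n`. -/
noncomputable def MC.green {E : Type*} [MeasurableSpace E] (M : MC E) (x0 x y : E) : ℝ≥0∞ :=
  ∫⁻ ω, (∑' n : ℕ, if ω n = y ∧ ∀ k, 1 ≤ k → k ≤ n → ω k ≠ x0 then (1 : ℝ≥0∞) else 0) ∂ M.P x

/-!
Nothing is assumed about the σ-algebra of `E`. Still, the cylinders
`{X_0 = x_0, …, X_n = x_n}` cover path space by countably many sets whose probabilities sum to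
one, so they, and hence all events depending on finitely many coordinates, are null-measurable.
For such an event `A ⊆ {X_n = a}` the finite-dimensional distributions give the one-step Markov
property `P_x(A, X_{n+1} = b) = P_x(A) p(a, b)`, and `G_{x0}(x, y)` is the sum over `n` of
`P_x(X_n = y, n < T'_{x0})`.

By irreducibility there are chains of transitions of positive probability from `x0` to `y` and
from `y` to `x0`. Cut at its last visit to `x0`, the first one makes `G_{x0}(x0, y)` positive.
Cut at its first visit to `x0`, the second one gives `m` and `δ > 0` with
`δ P_x(X_n = y, n < T'_{x0}) ≤ P_x(T'_{x0} = n + m + 1)` for all `n`; summing over `n`,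
`δ G_{x0}(x, y) ≤ 1`.
-/

open Set Function

theorem nullMeasurableSet_of_iUnion_eq_univ {α ι : Type*} [MeasurableSpace α] [Countable ι]
    {μ : Measure α} [IsFiniteMeasure μ] {s : ι → Set α} (hcover : ⋃ i, s i = univ)
    (hsum : ∑' i, μ (s i) ≤ μ univ) (i : ι) : NullMeasurableSet (s i) μ := by
  -- `s i` contains the measurable set `Rᶜ`, and the measures force `μ Rᶜ ≥ μ (s i)`.
  set R := toMeasurable μ (⋃ (j) (_ : j ≠ i), s j)
  have hR : MeasurableSet R := measurableSet_toMeasurable _ _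
  have hRc : Rᶜ ⊆ s i := by
    intro ω hω
    obtain ⟨j, hj⟩ := mem_iUnion.1 (hcover ▸ mem_univ ω)
    by_contra hi
    exact hω (subset_toMeasurable _ _ (mem_iUnion₂.2 ⟨j, fun h => hi (h ▸ hj), hj⟩))
  have hadd : μ (s i) + μ R ≤ μ univ := calc
    μ (s i) + μ R ≤ μ (s i) + ∑' j, if j = i then 0 else μ (s j) := by
      rw [measure_toMeasurable]
      gcongr
      refine (measure_iUnion_le _).trans (ENNReal.tsum_le_tsum fun j => ?_)
      by_cases h : j = i <;> simp [h]
    _ = ∑' j, μ (s j) := (ENNReal.tsum_eq_add_tsum_ite (f := fun j => μ (s j)) i).symm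
    _ ≤ μ univ := hsum
  have hle : μ (s i) ≤ μ Rᶜ := by
    rw [measure_compl hR (measure_ne_top _ _)]
    exact ENNReal.le_sub_of_add_le_right (measure_ne_top _ _) hadd
  exact hR.compl.nullMeasurableSet.congr
    (ae_eq_of_subset_of_measure_ge hRc hle hR.compl.nullMeasurableSet (measure_ne_top _ _))

namespace MC

variable {E : Type*}

def trunc (n : ℕ) (ω : ℕ → E) : Fin (n + 1) → E := fun i => ω i

theorem trunc_succ (n : ℕ) (ω : ℕ → E) :
    trunc (n + 1) ω = Fin.snoc (trunc n ω) (ω (n + 1)) := by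
  ext i
  induction i using Fin.lastCases <;> simp [trunc]

theorem preimage_image_trunc {n : ℕ} {A : Set (ℕ → E)} (hA : DependsOn (· ∈ A) (Iic n)) :
    trunc n ⁻¹' (trunc n '' A) = A := by
  refine Subset.antisymm ?_ (subset_preimage_image _ _)
  rintro ω ⟨ω', hω', h⟩
  have : (ω' ∈ A) = (ω ∈ A) := hA fun i hi => congrFun h ⟨i, Nat.lt_succ_of_le hi⟩
  exact this ▸ hω'

/-- The event `{X_n = y, n < T'_{x0}}`. -/
def visitBeforeReturn (x0 y : E) (n : ℕ) : Set (ℕ → E) :=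
  {ω | ω n = y ∧ ∀ k, 1 ≤ k → k ≤ n → ω k ≠ x0}

/-- The event `{T'_{x0} = t}` when `t ≥ 1`; for `t = 0` it is `{X_0 = x0}`. -/
def firstReturnAt (x0 : E) (t : ℕ) : Set (ℕ → E) :=
  {ω | ω t = x0 ∧ ∀ k, 1 ≤ k → k < t → ω k ≠ x0}

theorem dependsOn_visitBeforeReturn (x0 y : E) (n : ℕ) :
    DependsOn (· ∈ visitBeforeReturn x0 y n) (Iic n) := by
  intro ω ω' h
  have h' : ∀ k ≤ n, ω k = ω' k := h
  simp +contextual [visitBeforeReturn, h']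

theorem dependsOn_firstReturnAt (x0 : E) (t : ℕ) :
    DependsOn (· ∈ firstReturnAt x0 t) (Iic t) := by
  intro ω ω' h
  have h' : ∀ k ≤ t, ω k = ω' k := h
  simp +contextual [firstReturnAt, h', Nat.le_of_lt]

theorem visitBeforeReturn_zero (x0 y : E) : visitBeforeReturn x0 y 0 = {ω | ω 0 = y} := by
  ext ω
  simp only [visitBeforeReturn, mem_ofPred_eq, and_iff_left_iff_imp]
  intro _ k hk1 hk0
  omega

theorem visitBeforeReturn_inter_subset {x0 b : E} (hb : b ≠ x0) (a : E) (n : ℕ) :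
    visitBeforeReturn x0 a n ∩ {ω | ω (n + 1) = b} ⊆ visitBeforeReturn x0 b (n + 1) := by
  rintro ω ⟨⟨-, hω⟩, hb'⟩
  refine ⟨hb', fun k hk1 hk => ?_⟩
  rcases Nat.lt_succ_iff_lt_or_eq.1 (Nat.lt_succ_of_le hk) with hk | rfl
  · exact hω k hk1 (Nat.le_of_lt_succ hk)
  · exact hb' ▸ hb

theorem visitBeforeReturn_inter_subset_firstReturnAt (x0 a : E) (n : ℕ) :
    visitBeforeReturn x0 a n ∩ {ω | ω (n + 1) = x0} ⊆ firstReturnAt x0 (n + 1) :=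
  fun _ ⟨⟨_, hω⟩, hx0⟩ => ⟨hx0, fun k hk1 hk => hω k hk1 (Nat.le_of_lt_succ hk)⟩

theorem visitBeforeReturn_self_eq_empty (x0 : E) {n : ℕ} (hn : n ≠ 0) :
    visitBeforeReturn x0 x0 n = ∅ :=
  eq_empty_of_forall_notMem fun _ ⟨h, hω⟩ => hω n (Nat.one_le_iff_ne_zero.2 hn) le_rfl h

theorem pairwise_disjoint_firstReturnAt (x0 : E) :
    Pairwise (Disjoint on fun t => firstReturnAt x0 (t + 1)) := by
  refine pairwise_disjoint_on _ |>.2 fun s t hst => disjoint_left.2 fun ω hs ht => ?_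
  exact ht.2 (s + 1) (Nat.le_add_left 1 s) (by omega) hs.1

variable [MeasurableSpace E] (M : MC E)

instance (x : E) : IsProbabilityMeasure (M.P x) := M.prob x

def Step (a b : E) : Prop := M.p a b ≠ 0

theorem measure_trunc_preimage_singleton (x : E) (n : ℕ) (xs : Fin (n + 1) → E) :
    M.P x (trunc n ⁻¹' {xs}) =
      (if xs 0 = x then 1 else 0) * ∏ i : Fin n, M.p (xs i.castSucc) (xs i.succ) := by
  rw [← M.fdd]
  congr
  ext ω
  exact funext_iff

theorem measure_trunc_preimage_snoc (x : E) (n : ℕ) (xs : Fin (n + 1) → E) (b : E) :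
    M.P x (trunc (n + 1) ⁻¹' {Fin.snoc xs b}) =
      M.P x (trunc n ⁻¹' {xs}) * M.p (xs (Fin.last n)) b := by
  simp [measure_trunc_preimage_singleton, Fin.prod_univ_castSucc, Fin.succ_castSucc,
    -Fin.castSucc_succ]

theorem measure_setOf_zero_eq (x y : E) : M.P x {ω | ω 0 = y} = if y = x then 1 else 0 := by
  have h := M.measure_trunc_preimage_singleton x 0 fun _ => y
  simp only [Finset.univ_eq_empty, Finset.prod_empty, mul_one] at h
  rw [← h]
  congr
  ext ω
  simp [trunc, funext_iff]

theorem tsum_measure_trunc_preimage_singleton (x : E) (n : ℕ) :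
    ∑' xs : Fin (n + 1) → E, M.P x (trunc n ⁻¹' {xs}) = 1 := by
  induction n with
  | zero =>
    rw [← (Equiv.funUnique (Fin 1) E).symm.tsum_eq,
      tsum_eq_single x fun y hy => by simp [measure_trunc_preimage_singleton, hy]]
    simp [measure_trunc_preimage_singleton]
  | succ n ih =>
    rw [← (Fin.snocEquiv fun _ => E).tsum_eq, ENNReal.tsum_prod', ENNReal.tsum_comm]
    simp [Fin.snocEquiv, measure_trunc_preimage_snoc, ENNReal.tsum_mul_left,
      M.stochastic, ih]

variable [Countable E]

theorem nullMeasurableSet_trunc_preimage (x : E) (n : ℕ) (T : Set (Fin (n + 1) → E)) :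
    NullMeasurableSet (trunc n ⁻¹' T) (M.P x) := by
  have hcover : ⋃ xs : Fin (n + 1) → E, trunc n ⁻¹' {xs} = univ :=
    eq_univ_of_forall fun ω => mem_iUnion.2 ⟨trunc n ω, rfl⟩
  rw [← biUnion_preimage_singleton]
  exact .biUnion T.to_countable fun xs _ => nullMeasurableSet_of_iUnion_eq_univ hcover
    (M.tsum_measure_trunc_preimage_singleton x n ▸ measure_univ.symm).le xs

theorem measure_trunc_preimage (x : E) (n : ℕ) (T : Set (Fin (n + 1) → E)) :
    M.P x (trunc n ⁻¹' T) = ∑' xs : T, M.P x (trunc n ⁻¹' {(xs : Fin (n + 1) → E)}) := by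
  rw [← biUnion_preimage_singleton]
  exact measure_biUnion₀ T.to_countable
    (fun xs _ ys _ h => ((disjoint_singleton.2 h).preimage _).aedisjoint)
    fun xs _ => M.nullMeasurableSet_trunc_preimage x n _

theorem nullMeasurableSet_of_dependsOn (x : E) {n : ℕ} {A : Set (ℕ → E)}
    (hA : DependsOn (· ∈ A) (Iic n)) : NullMeasurableSet A (M.P x) :=
  preimage_image_trunc hA ▸ M.nullMeasurableSet_trunc_preimage x n _

theorem measure_inter_setOf_succ_eq_mul (x : E) {n : ℕ} {A : Set (ℕ → E)}
    (hA : DependsOn (· ∈ A) (Iic n)) {a : E} (hAa : A ⊆ {ω | ω n = a}) (b : E) :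
    M.P x (A ∩ {ω | ω (n + 1) = b}) = M.P x A * M.p a b := by
  have hT : ∀ xs ∈ trunc n '' A, xs (Fin.last n) = a := by
    rintro _ ⟨ω, hω, rfl⟩
    exact hAa hω
  have hset :
      A ∩ {ω | ω (n + 1) = b} = trunc (n + 1) ⁻¹' ((Fin.snoc · b) '' (trunc n '' A)) := by
    conv_lhs => rw [← preimage_image_trunc hA]
    ext ω
    simp [trunc_succ, Fin.snoc_inj, eq_comm, ← and_assoc, exists_and_right]
  rw [hset, measure_trunc_preimage, tsum_image (fun ys => M.P x (trunc (n + 1) ⁻¹' {ys}))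
      (g := (Fin.snoc · b)) fun _ _ _ _ h => (Fin.snoc_inj.1 h).1]
  conv_rhs => rw [← preimage_image_trunc hA, measure_trunc_preimage, ← ENNReal.tsum_mul_right]
  exact tsum_congr fun xs => by rw [measure_trunc_preimage_snoc, hT xs xs.2]

theorem reflTransGen_of_measure_pos {x y : E} {n : ℕ} (h : 0 < M.P x {ω | ω n = y}) :
    Relation.ReflTransGen M.Step x y := by
  induction n generalizing y with
  | zero =>
    rw [measure_setOf_zero_eq] at h
    obtain rfl : y = x := by by_contra hyx; simp [hyx] at h
    exact .refl
  | succ n ih =>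
    have hsplit :
        {ω : ℕ → E | ω (n + 1) = y} ⊆ ⋃ a, {ω | ω n = a} ∩ {ω | ω (n + 1) = y} :=
      fun ω hω => mem_iUnion.2 ⟨ω n, rfl, hω⟩
    have hle : M.P x {ω | ω (n + 1) = y} ≤ ∑' a, M.P x {ω | ω n = a} * M.p a y := by
      refine (measure_mono hsplit).trans ((measure_iUnion_le _).trans_eq (tsum_congr fun a => ?_))
      exact M.measure_inter_setOf_succ_eq_mul x (fun ω ω' h => by simp [h n self_mem_Iic])
        subset_rfl y
    obtain ⟨a, ha⟩ : ∃ a, M.P x {ω | ω n = a} * M.p a y ≠ 0 := by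
      by_contra! h0
      exact h.not_ge (hle.trans_eq (ENNReal.tsum_eq_zero.2 h0))
    rw [mul_ne_zero_iff] at ha
    exact (ih (pos_iff_ne_zero.2 ha.1)).tail ha.2

variable {M} in
theorem Irreducible.reflTransGen (hirr : M.Irreducible) (x y : E) :
    Relation.ReflTransGen M.Step x y :=
  (hirr x y).elim fun _ => M.reflTransGen_of_measure_pos

theorem green_eq_tsum (x0 x y : E) :
    M.green x0 x y = ∑' n, M.P x (visitBeforeReturn x0 y n) := by
  have hmeas n := M.nullMeasurableSet_of_dependsOn x (dependsOn_visitBeforeReturn x0 y n)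
  simp_rw [← lintegral_indicator_one₀ (hmeas _)]
  rw [green, ← lintegral_tsum (f := fun n => (visitBeforeReturn x0 y n).indicator 1)
    fun n => aemeasurable_one.indicator₀ (hmeas n)]
  congr! with ω n
  simp only [indicator, Pi.one_apply]
  congr

theorem tsum_measure_firstReturnAt_le_one (x0 x : E) :
    ∑' t, M.P x (firstReturnAt x0 (t + 1)) ≤ 1 := by
  rw [← measure_iUnion₀ (pairwise_disjoint_firstReturnAt x0).aedisjoint
    fun t => M.nullMeasurableSet_of_dependsOn x (dependsOn_firstReturnAt x0 (t + 1))]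
  exact prob_le_one

theorem measure_visitBeforeReturn_mul (x0 x a b : E) (n : ℕ) :
    M.P x (visitBeforeReturn x0 a n) * M.p a b =
      M.P x (visitBeforeReturn x0 a n ∩ {ω | ω (n + 1) = b}) :=
  (M.measure_inter_setOf_succ_eq_mul x (dependsOn_visitBeforeReturn x0 a n) (fun _ h => h.1)
    b).symm

theorem exists_measure_visitBeforeReturn_pos {x0 y : E}
    (h : Relation.ReflTransGen M.Step x0 y) :
    ∃ n, 0 < M.P x0 (visitBeforeReturn x0 y n) := by
  have hx0 : 0 < M.P x0 (visitBeforeReturn x0 x0 0) := by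
    simp [visitBeforeReturn_zero, measure_setOf_zero_eq]
  induction h with
  | refl => exact ⟨0, hx0⟩
  | @tail a b _ hab ih =>
    obtain ⟨n, hn⟩ := ih
    by_cases hb : b = x0
    · exact ⟨0, hb ▸ hx0⟩
    refine ⟨n + 1, ?_⟩
    calc 0 < M.P x0 (visitBeforeReturn x0 a n) * M.p a b := ENNReal.mul_pos hn.ne' hab
      _ ≤ M.P x0 (visitBeforeReturn x0 b (n + 1)) := by
        rw [measure_visitBeforeReturn_mul]
        exact measure_mono (visitBeforeReturn_inter_subset hb a n)

theorem exists_mul_measure_visitBeforeReturn_le {x0 a : E}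
    (h : Relation.ReflTransGen M.Step a x0) (ha : a ≠ x0) :
    ∃ m, ∃ δ ≠ 0, ∀ x n,
      δ * M.P x (visitBeforeReturn x0 a n) ≤ M.P x (firstReturnAt x0 (n + m + 1)) := by
  induction h using Relation.ReflTransGen.head_induction_on with
  | refl => exact absurd rfl ha
  | @head a b hab _ ih =>
    by_cases hb : b = x0
    · subst hb
      refine ⟨0, M.p a b, hab, fun x n => ?_⟩
      rw [mul_comm, measure_visitBeforeReturn_mul]
      exact measure_mono (visitBeforeReturn_inter_subset_firstReturnAt b a n)
    obtain ⟨m, δ, hδ, hle⟩ := ih hb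
    refine ⟨m + 1, δ * M.p a b, mul_ne_zero hδ hab, fun x n => ?_⟩
    calc δ * M.p a b * M.P x (visitBeforeReturn x0 a n)
        = δ * M.P x (visitBeforeReturn x0 a n ∩ {ω | ω (n + 1) = b}) := by
          rw [mul_assoc, mul_comm (M.p a b), measure_visitBeforeReturn_mul]
      _ ≤ δ * M.P x (visitBeforeReturn x0 b (n + 1)) := by
          gcongr
          exact visitBeforeReturn_inter_subset hb a n
      _ ≤ M.P x (firstReturnAt x0 (n + (m + 1) + 1)) := by
          rw [← add_assoc, add_right_comm n]
          exact hle x (n + 1)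

theorem green_lt_top {x0 y : E} (h : Relation.ReflTransGen M.Step y x0)
    (x : E) : M.green x0 x y < ⊤ := by
  rw [green_eq_tsum]
  by_cases hy : y = x0
  · subst hy
    rw [tsum_eq_single 0 fun n hn => by rw [visitBeforeReturn_self_eq_empty y hn, measure_empty]]
    exact prob_le_one.trans_lt ENNReal.one_lt_top
  obtain ⟨m, δ, hδ, hle⟩ := M.exists_mul_measure_visitBeforeReturn_le h hy
  refine ENNReal.lt_top_of_mul_ne_top_right (ne_top_of_le_ne_top ENNReal.one_ne_top ?_) hδ
  calc δ * ∑' n, M.P x (visitBeforeReturn x0 y n)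
      = ∑' n, δ * M.P x (visitBeforeReturn x0 y n) := ENNReal.tsum_mul_left.symm
    _ ≤ ∑' n, M.P x (firstReturnAt x0 (n + m + 1)) := ENNReal.tsum_le_tsum fun n => hle x n
    _ ≤ ∑' t, M.P x (firstReturnAt x0 (t + 1)) :=
      ENNReal.tsum_comp_le_tsum_of_injective (add_left_injective m) _
    _ ≤ 1 := M.tsum_measure_firstReturnAt_le_one x0 x

theorem green_self_pos {x0 y : E} (h : Relation.ReflTransGen M.Step x0 y) :
    0 < M.green x0 x0 y := by
  obtain ⟨n, hn⟩ := M.exists_measure_visitBeforeReturn_pos h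
  rw [green_eq_tsum]
  exact hn.trans_le (ENNReal.le_tsum n)

end MC

theorem green_killed_finite_and_positive_general
    {E : Type*} [Countable E] [MeasurableSpace E]
    (M : MC E) (hirr : M.Irreducible) (x0 : E) :
    (∀ x y : E, M.green x0 x y < ⊤) ∧ (∀ y : E, 0 < M.green x0 x0 y) :=
  ⟨fun x y => M.green_lt_top (hirr.reflTransGen y x0) x,
    fun y => M.green_self_pos (hirr.reflTransGen x0 y)⟩

/-- For an irreducible recurrent Markov chain, the Green function of the chain killed just
before the first return time to `x0` is finite, and `G_{x0}(x0, y) > 0` for all `y`. -/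
theorem green_killed_finite_and_positive
    {E : Type*} [Countable E] [MeasurableSpace E]
    (M : MC E) (hirr : M.Irreducible) (hrec : M.Recurrent) (x0 : E) :
    (∀ x y : E, M.green x0 x y < ⊤) ∧ (∀ y : E, 0 < M.green x0 x0 y) :=
  green_killed_finite_and_positive_general M hirr x0
end

section
/- For an irreducible recurrent Markov chain with stationary measure β, the Green function of the chain killed just before returning to x0 satisfies G_{x0}(x0, y) = β(y)/β(x0) for all y ∈ E. -/
open MeasureTheory ENNReal
open scoped Classical NNReal

/-!
Let `G y = G_{x0}(x0, y) = ∑ₙ P_{x0}(Xₙ = y, Xₖ ≠ x0 for 1 ≤ k ≤ n)`. Splitting off the last step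
gives `G x0 = 1` and `G ≤ G P`: off `x0` this is an equality, at `x0` the right side is the
probability of returning to `x0`, which is `1` by recurrence. Unrolling `β P ≤ β` along paths
avoiding `x0` gives `β x0 • G ≤ β`. So `ν = β x0 • G` is subinvariant, lies below `β` and agrees
with it at `x0`. If `ν y < β y`, irreducibility yields `n` with `pⁿ(y, x0) > 0`, and then
`β x0 = ν x0 ≤ (ν Pⁿ) x0 < (β Pⁿ) x0 ≤ β x0`.
-/

theorem ENNReal.tsum_eq_tsum_snoc {α : Type*} {n : ℕ} (f : (Fin (n + 2) → α) → ℝ≥0∞) :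
    ∑' xs, f xs = ∑' (ys : Fin (n + 1) → α) (z : α), f (Fin.snoc ys z) := by
  rw [← (Fin.snocEquiv fun _ => α).tsum_eq, ENNReal.tsum_prod', ENNReal.tsum_comm]
  rfl

theorem MeasureTheory.nullMeasurableSet_of_measure_add_measure_compl_le {α : Type*}
    [MeasurableSpace α] {μ : Measure α} [IsFiniteMeasure μ] {s : Set α}
    (h : μ s + μ sᶜ ≤ μ Set.univ) : NullMeasurableSet s μ := by
  set t := toMeasurable μ s
  set u := toMeasurable μ sᶜ
  have hunion : t ∪ u = Set.univ :=
    Set.univ_subset_iff.1 fun ω _ => (em (ω ∈ s)).imp (subset_toMeasurable μ s ·)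
      (subset_toMeasurable μ sᶜ ·)
  have hinter : μ (t ∩ u) = 0 := by
    have := measure_union_add_inter (μ := μ) t (measurableSet_toMeasurable μ sᶜ)
    rw [hunion, measure_toMeasurable, measure_toMeasurable] at this
    refine le_antisymm (ENNReal.le_of_add_le_add_left (measure_ne_top μ Set.univ) ?_) zero_le
    rw [this, add_zero]
    exact h
  refine (measurableSet_toMeasurable μ s).nullMeasurableSet.congr (ae_eq_set.2 ⟨?_, ?_⟩)
  · exact measure_mono_null
      (show t \ s ⊆ t ∩ u from fun ω hω => ⟨hω.1, subset_toMeasurable μ sᶜ hω.2⟩) hinter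
  · simp [Set.sdiff_eq_empty.2 (subset_toMeasurable μ s)]

namespace MC

variable {E : Type*}

def pathPrefix (n : ℕ) (ω : ℕ → E) : Fin (n + 1) → E := fun i => ω i

def pathsAvoiding (H : Set E) (n : ℕ) : Set (Fin (n + 1) → E) :=
  {xs | ∀ k : Fin (n + 1), 1 ≤ (k : ℕ) → xs k ∉ H}

theorem pathPrefix_mem_pathsAvoiding {H : Set E} {n : ℕ} {ω : ℕ → E} :
    pathPrefix n ω ∈ pathsAvoiding H n ↔ ∀ k, 1 ≤ k → k ≤ n → ω k ∉ H :=
  ⟨fun h k hk hkn => h ⟨k, by omega⟩ hk, fun h k hk => h k hk (by omega)⟩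

variable [MeasurableSpace E]

theorem measure_exists_visit_le_tsum_firstVisit (μ : Measure (ℕ → E)) (x : E) :
    μ {ω | ∃ m, 1 ≤ m ∧ ω m = x}
      ≤ ∑' n, μ {ω | ω (n + 1) = x ∧ ∀ k, 1 ≤ k → k ≤ n → ω k ∉ ({x} : Set E)} := by
  refine (measure_mono fun ω hω => ?_).trans (measure_iUnion_le _)
  obtain ⟨m, hm, hωm⟩ := hω
  have hex : ∃ j, ω (j + 1) = x := ⟨m - 1, by rwa [Nat.sub_add_cancel hm]⟩
  refine Set.mem_iUnion.2 ⟨Nat.find hex, Nat.find_spec hex, fun k hk hkn hωk => ?_⟩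
  exact Nat.find_min hex (show k - 1 < Nat.find hex by omega) (by rwa [Nat.sub_add_cancel hk])

variable (M : MC E)

noncomputable def pathWeight (x : E) {n : ℕ} (xs : Fin (n + 1) → E) : ℝ≥0∞ :=
  (if xs 0 = x then 1 else 0) * ∏ i : Fin n, M.p (xs i.castSucc) (xs i.succ)

theorem pathWeight_snoc (x : E) {n : ℕ} (ys : Fin (n + 1) → E) (z : E) :
    M.pathWeight x (Fin.snoc ys z : Fin (n + 2) → E)
      = M.pathWeight x ys * M.p (ys (Fin.last n)) z := by
  simp [pathWeight, Fin.prod_univ_castSucc, -Fin.castSucc_succ, Fin.succ_castSucc]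

theorem tsum_pathWeight (x : E) (n : ℕ) : ∑' xs : Fin (n + 1) → E, M.pathWeight x xs = 1 := by
  induction n with
  | zero =>
    rw [← (Equiv.funUnique (Fin 1) E).symm.tsum_eq]
    simp [pathWeight]
  | succ n ih =>
    simp_rw [ENNReal.tsum_eq_tsum_snoc, pathWeight_snoc, ENNReal.tsum_mul_left, M.stochastic,
      mul_one, ih]

theorem tsum_indicator_pathWeight_add_compl (x : E) {n : ℕ} (S : Set (Fin (n + 1) → E)) :
    ∑' xs, S.indicator (M.pathWeight x) xs + ∑' xs, Sᶜ.indicator (M.pathWeight x) xs = 1 := by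
  rw [← ENNReal.tsum_add, ← M.tsum_pathWeight x n]
  simp_rw [Set.indicator_self_add_compl_apply]

/-- Chung's taboo probability `_H pⁿ(x, y)`; for `H = ∅` the `n`-step transition probability. -/
noncomputable def tabooProb (H : Set E) (n : ℕ) (x y : E) : ℝ≥0∞ :=
  M.P x {ω | ω n = y ∧ ∀ k, 1 ≤ k → k ≤ n → ω k ∉ H}

theorem tabooProb_zero (H : Set E) (x y : E) : M.tabooProb H 0 x y = if y = x then 1 else 0 := by
  have hset : {ω : ℕ → E | ω 0 = y ∧ ∀ k, 1 ≤ k → k ≤ 0 → ω k ∉ H}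
      = {ω | ∀ i : Fin (0 + 1), ω i = (fun _ => y) i} := by
    ext ω
    exact ⟨fun h i => by fin_cases i; exact h.1, fun h => ⟨h 0, fun k hk hk0 => by omega⟩⟩
  rw [tabooProb, hset, M.fdd]
  simp

theorem tsum_mul_tabooProb_zero (H : Set E) (ν : E → ℝ≥0∞) (z : E) :
    ∑' x, ν x * M.tabooProb H 0 x z = ν z := by
  simp [tabooProb_zero]

theorem tabooProb_empty (n : ℕ) (x y : E) : M.tabooProb ∅ n x y = M.P x {ω | ω n = y} := by
  simp [tabooProb]

variable [Countable E]

theorem measure_preimage_pathPrefix_le (x : E) {n : ℕ} (S : Set (Fin (n + 1) → E)) :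
    M.P x (pathPrefix n ⁻¹' S) ≤ ∑' xs, S.indicator (M.pathWeight x) xs := by
  calc M.P x (pathPrefix n ⁻¹' S)
      ≤ M.P x (⋃ xs ∈ S, {ω | ∀ i : Fin (n + 1), ω i = xs i}) :=
        measure_mono fun ω hω => Set.mem_biUnion hω fun _ => rfl
    _ ≤ ∑' xs : S, M.P x {ω | ∀ i : Fin (n + 1), ω i = xs.1 i} :=
        measure_biUnion_le _ S.to_countable _
    _ = ∑' xs, S.indicator (M.pathWeight x) xs :=
        (tsum_congr fun xs : S => M.fdd x n xs.1).trans (tsum_subtype S (M.pathWeight x))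

/- No measurability of points of `E` is assumed, so path events need not be measurable. Bounding
an event and its complement by cylinder probabilities shows that they are null-measurable. -/
theorem nullMeasurableSet_preimage_pathPrefix (x : E) {n : ℕ} (S : Set (Fin (n + 1) → E)) :
    NullMeasurableSet (pathPrefix n ⁻¹' S) (M.P x) := by
  have := M.prob x
  refine nullMeasurableSet_of_measure_add_measure_compl_le (μ := M.P x) ?_
  calc M.P x (pathPrefix n ⁻¹' S) + M.P x (pathPrefix n ⁻¹' Sᶜ)
      ≤ ∑' xs, S.indicator (M.pathWeight x) xs + ∑' xs, Sᶜ.indicator (M.pathWeight x) xs :=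
        add_le_add (M.measure_preimage_pathPrefix_le x S) (M.measure_preimage_pathPrefix_le x Sᶜ)
    _ = M.P x Set.univ := by
        rw [M.tsum_indicator_pathWeight_add_compl, measure_univ]

theorem measure_preimage_pathPrefix (x : E) {n : ℕ} (S : Set (Fin (n + 1) → E)) :
    M.P x (pathPrefix n ⁻¹' S) = ∑' xs, S.indicator (M.pathWeight x) xs := by
  have := M.prob x
  have htotal :=
    measure_add_measure_compl₀ (μ := M.P x) (M.nullMeasurableSet_preimage_pathPrefix x S)
  refine le_antisymm (M.measure_preimage_pathPrefix_le x S)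
    (ENNReal.le_of_add_le_add_right (measure_ne_top (M.P x) (pathPrefix n ⁻¹' S)ᶜ) ?_)
  calc ∑' xs, S.indicator (M.pathWeight x) xs + M.P x (pathPrefix n ⁻¹' S)ᶜ
      ≤ ∑' xs, S.indicator (M.pathWeight x) xs + ∑' xs, Sᶜ.indicator (M.pathWeight x) xs :=
        add_le_add_right (M.measure_preimage_pathPrefix_le x Sᶜ) _
    _ = M.P x (pathPrefix n ⁻¹' S) + M.P x (pathPrefix n ⁻¹' S)ᶜ := by
        rw [htotal, M.tsum_indicator_pathWeight_add_compl, measure_univ]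

theorem measure_eval_succ_eq_tsum (x y : E) {n : ℕ} (S : Set (Fin (n + 1) → E)) :
    M.P x {ω | ω (n + 1) = y ∧ pathPrefix n ω ∈ S}
      = ∑' z, M.P x {ω | ω n = z ∧ pathPrefix n ω ∈ S} * M.p z y := by
  have hL : {ω | ω (n + 1) = y ∧ pathPrefix n ω ∈ S}
      = pathPrefix (n + 1) ⁻¹' {xs | xs (Fin.last (n + 1)) = y ∧ Fin.init xs ∈ S} := rfl
  have hR : ∀ z, {ω | ω n = z ∧ pathPrefix n ω ∈ S}
      = pathPrefix n ⁻¹' {xs | xs (Fin.last n) = z ∧ xs ∈ S} := fun z => rfl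
  simp_rw [hL, hR, measure_preimage_pathPrefix, ENNReal.tsum_eq_tsum_snoc,
    ← ENNReal.tsum_mul_right]
  conv_rhs => rw [ENNReal.tsum_comm]
  refine tsum_congr fun ys => ?_
  simp [Set.indicator_apply, pathWeight_snoc, ite_and]

theorem nullMeasurableSet_taboo (x y : E) (H : Set E) (n : ℕ) :
    NullMeasurableSet {ω | ω n = y ∧ ∀ k, 1 ≤ k → k ≤ n → ω k ∉ H} (M.P x) := by
  simp only [← pathPrefix_mem_pathsAvoiding]
  exact M.nullMeasurableSet_preimage_pathPrefix x
    {xs | xs (Fin.last n) = y ∧ xs ∈ pathsAvoiding H n}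

theorem measure_eval_succ_taboo (x y : E) (H : Set E) (n : ℕ) :
    M.P x {ω | ω (n + 1) = y ∧ ∀ k, 1 ≤ k → k ≤ n → ω k ∉ H}
      = ∑' z, M.tabooProb H n x z * M.p z y := by
  simp only [tabooProb, ← pathPrefix_mem_pathsAvoiding]
  exact M.measure_eval_succ_eq_tsum x y _

theorem tabooProb_succ (H : Set E) (n : ℕ) (x y : E) :
    M.tabooProb H (n + 1) x y = if y ∈ H then 0 else ∑' z, M.tabooProb H n x z * M.p z y := by
  split_ifs with hy
  · refine measure_mono_null (fun ω hω => ?_) measure_empty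
    exact hω.2 (n + 1) le_add_self le_rfl (hω.1 ▸ hy)
  · rw [← measure_eval_succ_taboo, tabooProb]
    congr 1
    ext ω
    refine and_congr_right fun hωy => ⟨fun h k hk hkn => h k hk (by omega), fun h k hk hkn => ?_⟩
    rcases Nat.lt_or_eq_of_le hkn with hkn | rfl
    · exact h k hk (by omega)
    · exact hωy ▸ hy

theorem green_eq_tsum_tabooProb (x0 x y : E) : M.green x0 x y = ∑' n, M.tabooProb {x0} n x y := by
  set A : ℕ → Set (ℕ → E) := fun n => {ω | ω n = y ∧ ∀ k, 1 ≤ k → k ≤ n → ω k ∉ ({x0} : Set E)}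
  have hA : ∀ n, NullMeasurableSet (A n) (M.P x) := fun n => M.nullMeasurableSet_taboo x y {x0} n
  calc M.green x0 x y = ∫⁻ ω, ∑' n, (A n).indicator 1 ω ∂M.P x := by
        simp only [MC.green, Set.indicator_apply]
        congr!
    _ = ∑' n, M.tabooProb {x0} n x y := by
      rw [lintegral_tsum fun n => measurable_one.aemeasurable.indicator₀ (hA n)]
      exact tsum_congr fun n => lintegral_indicator_one₀ (hA n)

theorem tsum_mul_tabooProb_empty_succ (ν : E → ℝ≥0∞) (n : ℕ) (z : E) :
    ∑' x, ν x * M.tabooProb ∅ (n + 1) x z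
      = ∑' w, (∑' x, ν x * M.tabooProb ∅ n x w) * M.p w z := by
  simp_rw [tabooProb_succ, Set.mem_empty_iff_false, if_false, ← ENNReal.tsum_mul_left,
    ← ENNReal.tsum_mul_right, mul_assoc]
  exact ENNReal.tsum_comm

theorem tsum_mul_tabooProb_empty_le {ν : E → ℝ≥0∞} (hν : ∀ z, ∑' x, ν x * M.p x z ≤ ν z)
    (n : ℕ) (z : E) : ∑' x, ν x * M.tabooProb ∅ n x z ≤ ν z := by
  induction n generalizing z with
  | zero => rw [tsum_mul_tabooProb_zero]
  | succ n ih =>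
    rw [tsum_mul_tabooProb_empty_succ]
    exact (ENNReal.tsum_le_tsum fun w => mul_le_mul_left (ih w) _).trans (hν z)

theorem le_tsum_mul_tabooProb_empty {ν : E → ℝ≥0∞} (hν : ∀ z, ν z ≤ ∑' x, ν x * M.p x z)
    (n : ℕ) (z : E) : ν z ≤ ∑' x, ν x * M.tabooProb ∅ n x z := by
  induction n generalizing z with
  | zero => rw [tsum_mul_tabooProb_zero]
  | succ n ih =>
    rw [tsum_mul_tabooProb_empty_succ]
    exact (hν z).trans (ENNReal.tsum_le_tsum fun w => mul_le_mul_left (ih w) _)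

variable {M} in
theorem Irreducible.eq_of_le_of_subinvariant (hirr : M.Irreducible) {ν β : E → ℝ≥0∞} {x0 : E}
    (hβ : ∀ z, ∑' x, β x * M.p x z ≤ β z) (hν : ∀ z, ν z ≤ ∑' x, ν x * M.p x z)
    (hle : ∀ z, ν z ≤ β z) (hx0 : ν x0 = β x0) (hfin : β x0 ≠ ⊤) : ν = β := by
  funext y
  refine le_antisymm (hle y) (not_lt.1 fun hlt => ?_)
  obtain ⟨n, hn⟩ := hirr y x0
  rw [← tabooProb_empty] at hn
  have hq_top : M.tabooProb ∅ n y x0 ≠ ⊤ := by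
    have := M.prob y
    exact measure_ne_top _ _
  have hνβ : ∀ x, ν x * M.tabooProb ∅ n x x0 ≤ β x * M.tabooProb ∅ n x x0 :=
    fun x => mul_le_mul_left (hle x) _
  have hβn := M.tsum_mul_tabooProb_empty_le hβ n x0
  refine lt_irrefl (β x0) ?_
  calc β x0 = ν x0 := hx0.symm
    _ ≤ ∑' x, ν x * M.tabooProb ∅ n x x0 := M.le_tsum_mul_tabooProb_empty hν n x0
    _ < ∑' x, β x * M.tabooProb ∅ n x x0 :=
        ENNReal.tsum_lt_tsum (ne_top_of_le_ne_top hfin ((ENNReal.tsum_le_tsum hνβ).trans hβn)) hνβ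
          (ENNReal.mul_lt_mul_left hn.ne' hq_top hlt)
    _ ≤ β x0 := hβn

section Green

variable (x0 : E)

theorem green_self : M.green x0 x0 x0 = 1 := by
  rw [green_eq_tsum_tabooProb, tsum_eq_zero_add' ENNReal.summable]
  simp [tabooProb_zero, tabooProb_succ]

theorem green_le_tsum_green_mul (hrec : M.Recurrent) (z : E) :
    M.green x0 x0 z ≤ ∑' x, M.green x0 x0 x * M.p x z := by
  have hswap : ∑' x, M.green x0 x0 x * M.p x z
      = ∑' n, ∑' x, M.tabooProb {x0} n x0 x * M.p x z := by
    simp_rw [green_eq_tsum_tabooProb, ← ENNReal.tsum_mul_right]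
    exact ENNReal.tsum_comm
  rw [hswap]
  by_cases hz : z = x0
  · subst hz
    calc M.green z z z = M.P z {ω | ∀ N, ∃ n, N ≤ n ∧ ω n = z} := by rw [green_self, hrec z]
      _ ≤ M.P z {ω | ∃ m, 1 ≤ m ∧ ω m = z} := measure_mono fun ω hω => hω 1
      _ ≤ _ := measure_exists_visit_le_tsum_firstVisit _ z
      _ = _ := tsum_congr fun n => M.measure_eval_succ_taboo z z {z} n
  · rw [green_eq_tsum_tabooProb, tsum_eq_zero_add' ENNReal.summable]
    simp [tabooProb_zero, tabooProb_succ, hz]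

theorem mul_green_le {β : E → ℝ≥0∞} (hβ : ∀ z, ∑' x, β x * M.p x z ≤ β z) (z : E) :
    β x0 * M.green x0 x0 z ≤ β z := by
  have hpartial : ∀ N z, β x0 * ∑ n ∈ Finset.range N, M.tabooProb {x0} n x0 z ≤ β z := by
    intro N
    induction N with
    | zero => simp
    | succ N ih =>
      intro z
      rw [Finset.sum_range_succ', tabooProb_zero]
      by_cases hz : z = x0
      · simp [hz, tabooProb_succ]
      · simp only [tabooProb_succ, Set.mem_singleton_iff, hz, if_false, add_zero]
        calc β x0 * ∑ n ∈ Finset.range N, ∑' x, M.tabooProb {x0} n x0 x * M.p x z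
            = ∑' x, β x0 * (∑ n ∈ Finset.range N, M.tabooProb {x0} n x0 x) * M.p x z := by
              rw [← Summable.tsum_finsetSum fun _ _ => ENNReal.summable, ← ENNReal.tsum_mul_left]
              simp_rw [mul_assoc, Finset.sum_mul]
          _ ≤ ∑' x, β x * M.p x z := ENNReal.tsum_le_tsum fun x => mul_le_mul_left (ih x) _
          _ ≤ β z := hβ z
  rw [green_eq_tsum_tabooProb, ENNReal.tsum_eq_iSup_nat, ENNReal.mul_iSup]
  exact iSup_le fun N => hpartial N z

end Green

end MC

/-- For an irreducible recurrent Markov chain with stationary measure `β`, the Green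
function of the chain killed just before returning to `x0` satisfies
`G_{x0}(x0, y) = β(y) / β(x0)`. -/
theorem green_killed_diag_eq_stationary_ratio
    {E : Type*} [Countable E] [MeasurableSpace E]
    (M : MC E) (hirr : M.Irreducible) (hrec : M.Recurrent)
    (β : E → ℝ≥0∞) (hβpos : ∀ x, 0 < β x) (hβfin : ∀ x, β x < ⊤)
    (hβstat : ∀ y, β y = ∑' x, β x * M.p x y)
    (x0 y : E) :
    M.green x0 x0 y = β y / β x0 := by
  have hβ : ∀ z, ∑' x, β x * M.p x z ≤ β z := fun z => (hβstat z).ge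
  have hsub : ∀ z, β x0 * M.green x0 x0 z ≤ ∑' x, β x0 * M.green x0 x0 x * M.p x z := fun z =>
    calc β x0 * M.green x0 x0 z ≤ β x0 * ∑' x, M.green x0 x0 x * M.p x z :=
          mul_le_mul_right (M.green_le_tsum_green_mul x0 hrec z) _
      _ = ∑' x, β x0 * M.green x0 x0 x * M.p x z := by
          rw [← ENNReal.tsum_mul_left]
          simp_rw [mul_assoc]
  have hscaled : (fun z => β x0 * M.green x0 x0 z) = β :=
    hirr.eq_of_le_of_subinvariant hβ hsub (M.mul_green_le x0 hβ)
      (by rw [M.green_self, mul_one]) (hβfin x0).ne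
  rw [ENNReal.eq_div_iff (hβpos x0).ne' (hβfin x0).ne]
  exact congrFun hscaled y
end

section
/- Let y∞ be an infinite sequence over {0,…,k−1}, let y_m be its prefix of length m, and define φ(x) = k^{j(x)} − 1 where j(x) is the length of the longest common prefix of x and y∞. Then φ is the unique (up to nonnegative multiple) nonnegative function on the k-ary tree vanishing at ∅, harmonic at every vertex ≠ ∅ for the tree random walk, that is bounded above by φ itself; i.e. φ is minimal: any nonnegative ψ with ψ(∅)=0, harmonic off ∅, and ψ ≤ φ pointwise satisfies ψ = cφ for some c ∈ [0,1]. -/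
/-!
Off the ray, `φ` equals `k^m − 1` on each subtree of vertices `y_m ++ i :: t` with
`i ≠ y∞ m`, so there `ψ` is a bounded harmonic function. Since the walk steps back towards
the root with probability `1/2`, the largest deviation `S d` of `ψ` from `ψ(y_m)` on the
`d`-th level of the subtree is convex in `d` (the deviation at `y_m` itself being `0`); a
bounded convex sequence is nonincreasing, so `ψ` is constant on the subtree. Harmonicity at
`y_{m+1}` then gives the recurrence `ψ(y_{m+2}) = (k+1) ψ(y_{m+1}) − k ψ(y_m)`, with
characteristic roots `1` and `k`, and `ψ(∅) = 0` forces `ψ(y_m) = c (k^m − 1)`.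
-/

/-- Length of the longest common prefix of two lists. -/
def commonLen {α : Type*} [DecidableEq α] : List α → List α → ℕ
  | a :: as, b :: bs => if a = b then commonLen as bs + 1 else 0
  | _, _ => 0

/-- `ψ` is harmonic at the nonempty vertex `x` for the `k`-ary tree random walk. -/
def treeHarmAt (k : ℕ) (ψ : List (Fin k) → ℝ) (x : List (Fin k)) : Prop :=
  ψ x = (1 / 2) * ψ x.dropLast + ∑ j : Fin k, (1 / (2 * (k : ℝ))) * ψ (x ++ [j])

/-- Length of the longest common prefix of a finite sequence `x` with the infinite ray
`y∞`. -/
def rayLen {k : ℕ} (yinf : ℕ → Fin k) (x : List (Fin k)) : ℕ :=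
  commonLen x (List.ofFn fun i : Fin x.length => yinf i)

section Harmonic

variable {k : ℕ} {ψ : List (Fin k) → ℝ} {x : List (Fin k)}

theorem treeHarmAt_iff_of_apply_append_eq (j₀ : Fin k)
    (h : ∀ j ≠ j₀, ψ (x ++ [j]) = ψ x) :
    treeHarmAt k ψ x ↔ ψ (x ++ [j₀]) = (k + 1) * ψ x - k * ψ x.dropLast := by
  have hk : (k : ℝ) ≠ 0 := by exact_mod_cast j₀.pos.ne'
  have hsum : ∑ j : Fin k, ψ (x ++ [j]) = k * ψ x + (ψ (x ++ [j₀]) - ψ x) := by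
    rw [Finset.sum_congr rfl fun j _ => show ψ (x ++ [j]) =
        ψ x + if j = j₀ then ψ (x ++ [j₀]) - ψ x else 0 by
      by_cases hj : j = j₀ <;> simp [hj, h]]
    simp [Finset.sum_add_distrib]
  rw [treeHarmAt, ← Finset.mul_sum, hsum]
  field_simp
  constructor <;> intro <;> linarith

theorem treeHarmAt.abs_sub_le [NeZero k] (hx : treeHarmAt k ψ x) (c : ℝ) :
    |ψ x - c| ≤
      1 / 2 * |ψ x.dropLast - c| + ∑ j : Fin k, 1 / (2 * (k : ℝ)) * |ψ (x ++ [j]) - c| := by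
  have hk : (k : ℝ) ≠ 0 := Nat.cast_ne_zero.2 (NeZero.ne k)
  have hcentered : ψ x - c =
      1 / 2 * (ψ x.dropLast - c) + ∑ j : Fin k, 1 / (2 * (k : ℝ)) * (ψ (x ++ [j]) - c) := by
    simp only [mul_sub, Finset.sum_sub_distrib, Finset.sum_const, Finset.card_univ,
      Fintype.card_fin, nsmul_eq_mul]
    rw [hx]
    field_simp
    ring
  calc |ψ x - c|
      ≤ |1 / 2 * (ψ x.dropLast - c)| +
          ∑ j : Fin k, |1 / (2 * (k : ℝ)) * (ψ (x ++ [j]) - c)| := by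
        rw [hcentered]
        exact (abs_add_le _ _).trans (by gcongr; exact Finset.abs_sum_le_sum_abs _ _)
    _ = _ := by simp only [abs_mul, abs_of_nonneg (by positivity : (0 : ℝ) ≤ 1 / 2),
        abs_of_nonneg (by positivity : (0 : ℝ) ≤ 1 / (2 * (k : ℝ)))]

end Harmonic

theorem antitone_of_two_mul_le_add_of_bddAbove {S : ℕ → ℝ}
    (hconv : ∀ n, 2 * S (n + 1) ≤ S n + S (n + 2)) (hbdd : BddAbove (Set.range S)) :
    Antitone S := by
  obtain ⟨B, hB⟩ := hbdd
  have hdiff : Monotone fun n => S (n + 1) - S n :=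
    monotone_nat_of_le_succ fun n => by linarith [hconv n]
  refine antitone_nat_of_succ_le fun n => ?_
  by_contra! hlt
  set δ := S (n + 1) - S n
  have hgrowth : ∀ m : ℕ, S n + m * δ ≤ S (n + m) := by
    intro m
    induction m with
    | zero => simp
    | succ m ih =>
      have := hdiff (Nat.le_add_right n m)
      push_cast
      simp only [← add_assoc] at this ⊢
      linarith
  obtain ⟨m, hm⟩ := exists_nat_gt ((B - S n) / δ)
  rw [div_lt_iff₀ (by linarith)] at hm
  linarith [hgrowth m, hB ⟨n + m, rfl⟩]

theorem sub_one_mul_eq_of_recurrence {r : ℝ} {a : ℕ → ℝ} (h0 : a 0 = 0)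
    (hrec : ∀ m, a (m + 2) = (r + 1) * a (m + 1) - r * a m) (m : ℕ) :
    (r - 1) * a m = a 1 * (r ^ m - 1) := by
  induction m using Nat.twoStepInduction with
  | zero => simp [h0]
  | one => ring
  | more m ih₀ ih₁ =>
    rw [hrec, pow_succ, pow_succ]
    rw [pow_succ] at ih₁
    linear_combination (r + 1) * ih₁ - r * ih₀

theorem le_zero_of_subMean_of_bddAbove {k : ℕ} [NeZero k] {g : List (Fin k) → ℝ}
    (hbdd : BddAbove (Set.range g)) (hroot : g [] ≤ ∑ j : Fin k, 1 / (2 * (k : ℝ)) * g [j])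
    (hmean : ∀ t ≠ [],
      g t ≤ 1 / 2 * g t.dropLast + ∑ j : Fin k, 1 / (2 * (k : ℝ)) * g (t ++ [j]))
    (t : List (Fin k)) : g t ≤ 0 := by
  obtain ⟨B, hB⟩ := hbdd
  -- the maxima `S d` of `g` over the levels `d` form a bounded convex sequence
  let S : ℕ → ℝ := fun d =>
    Finset.univ.sup' Finset.univ_nonempty fun f : Fin d → Fin k => g (List.ofFn f)
  have hle_S (t : List (Fin k)) : g t ≤ S t.length := by
    simpa using Finset.le_sup' (fun f : Fin t.length → Fin k => g (List.ofFn f))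
      (Finset.mem_univ t.get)
  have hS_attained (d : ℕ) : ∃ t : List (Fin k), t.length = d ∧ S d = g t := by
    obtain ⟨f, -, hf⟩ := Finset.exists_mem_eq_sup' Finset.univ_nonempty
      fun f : Fin d → Fin k => g (List.ofFn f)
    exact ⟨List.ofFn f, List.length_ofFn, hf⟩
  have hchildren (t : List (Fin k)) :
      ∑ j : Fin k, 1 / (2 * (k : ℝ)) * g (t ++ [j]) ≤ 1 / 2 * S (t.length + 1) :=
    calc ∑ j : Fin k, 1 / (2 * (k : ℝ)) * g (t ++ [j])
        ≤ ∑ _j : Fin k, 1 / (2 * (k : ℝ)) * S (t.length + 1) :=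
          Finset.sum_le_sum fun j _ => by gcongr; simpa using hle_S (t ++ [j])
      _ = 1 / 2 * S (t.length + 1) := by
          rw [Finset.sum_const, Finset.card_univ, Fintype.card_fin, nsmul_eq_mul]
          field_simp [Nat.cast_ne_zero.2 (NeZero.ne k)]
  have hconv (d : ℕ) : 2 * S (d + 1) ≤ S d + S (d + 2) := by
    obtain ⟨t, ht, hS⟩ := hS_attained (d + 1)
    obtain ⟨t, e, rfl⟩ := (t.eq_nil_or_concat).resolve_left (by rintro rfl; simp at ht)
    simp only [List.concat_eq_append, List.length_append, List.length_singleton,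
      add_left_inj] at ht hS
    have hparent := hle_S t
    have hchild := hchildren (t ++ [e])
    have hsub := hmean (t ++ [e]) (by simp)
    rw [List.length_append, List.length_singleton, ht, show d + 1 + 1 = d + 2 from rfl] at hchild
    rw [ht] at hparent
    rw [List.dropLast_concat] at hsub
    linarith
  have hS_zero : 2 * S 0 ≤ S 1 := by
    obtain ⟨t, ht, hS⟩ := hS_attained 0
    rw [List.length_eq_zero_iff.1 ht] at hS
    have hchild := hchildren []
    simp only [List.nil_append, List.length_nil, zero_add] at hchild
    linarith
  have hanti := antitone_of_two_mul_le_add_of_bddAbove hconv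
    ⟨B, by
      rintro _ ⟨d, rfl⟩
      obtain ⟨t, -, ht⟩ := hS_attained d
      exact ht ▸ hB ⟨t, rfl⟩⟩
  linarith [hle_S t, hanti (Nat.zero_le t.length), hanti (Nat.zero_le 1)]

theorem apply_append_eq_apply_dropLast_of_treeHarmAt {k : ℕ} [NeZero k]
    {ψ : List (Fin k) → ℝ} {z : List (Fin k)} (harm : ∀ t, treeHarmAt k ψ (z ++ t))
    {B : ℝ} (hB : ∀ t, |ψ (z ++ t)| ≤ B) (t : List (Fin k)) :
    ψ (z ++ t) = ψ z.dropLast := by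
  have hbdd : BddAbove (Set.range fun t => |ψ (z ++ t) - ψ z.dropLast|) :=
    ⟨B + |ψ z.dropLast|, by
      rintro _ ⟨t, rfl⟩
      exact (abs_sub _ _).trans (by gcongr; exact hB t)⟩
  refine sub_eq_zero.1 <| abs_nonpos_iff.1 <|
    le_zero_of_subMean_of_bddAbove hbdd ?_ (fun t ht => ?_) t
  · simpa using (harm []).abs_sub_le (ψ z.dropLast)
  · simpa [List.dropLast_append_of_ne_nil ht] using (harm t).abs_sub_le (ψ z.dropLast)

theorem commonLen_append_left {α : Type*} [DecidableEq α] (l s s' : List α) :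
    commonLen (l ++ s) (l ++ s') = l.length + commonLen s s' := by
  induction l with
  | nil => simp
  | cons a l ih => simp only [List.cons_append, commonLen, if_pos, ih, List.length_cons]; omega

section Ray

variable {k : ℕ} (y : ℕ → Fin k)

def rayPrefix (n : ℕ) : List (Fin k) := List.ofFn fun i : Fin n => y i

@[simp] theorem length_rayPrefix (n : ℕ) : (rayPrefix y n).length = n := List.length_ofFn

theorem rayLen_eq_commonLen (x : List (Fin k)) : rayLen y x = commonLen x (rayPrefix y x.length) :=
  rfl

theorem rayPrefix_add (m n : ℕ) :
    rayPrefix y (m + n) = rayPrefix y m ++ List.ofFn fun i : Fin n => y (m + i) := by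
  simp [rayPrefix, List.ofFn_add]

theorem rayPrefix_succ (n : ℕ) : rayPrefix y (n + 1) = rayPrefix y n ++ [y n] := by
  simpa using rayPrefix_add y n 1

theorem dropLast_rayPrefix_succ (n : ℕ) : (rayPrefix y (n + 1)).dropLast = rayPrefix y n := by
  rw [rayPrefix_succ, List.dropLast_concat]

theorem rayLen_rayPrefix (m : ℕ) : rayLen y (rayPrefix y m) = m := by
  rw [rayLen_eq_commonLen, length_rayPrefix]
  simpa [commonLen] using commonLen_append_left (rayPrefix y m) [] []

theorem rayLen_rayPrefix_append_cons {m : ℕ} {i : Fin k} (hi : i ≠ y m) (t : List (Fin k)) :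
    rayLen y (rayPrefix y m ++ i :: t) = m := by
  rw [rayLen_eq_commonLen, List.length_append, length_rayPrefix, List.length_cons, rayPrefix_add,
    List.ofFn_succ, commonLen_append_left, length_rayPrefix]
  simp [commonLen, hi]

theorem rayLen_dropLast_rayPrefix_append_cons {m : ℕ} {i : Fin k} (hi : i ≠ y m)
    (t : List (Fin k)) : rayLen y (rayPrefix y m ++ i :: t).dropLast = m := by
  rcases t.eq_nil_or_concat with rfl | ⟨t, e, rfl⟩
  · rw [List.dropLast_concat, rayLen_rayPrefix]
  · rw [show rayPrefix y m ++ i :: t.concat e = (rayPrefix y m ++ i :: t) ++ [e] by simp,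
      List.dropLast_concat, rayLen_rayPrefix_append_cons y hi]

theorem eq_rayPrefix_or_exists_rayPrefix_append_cons (x : List (Fin k)) :
    x = rayPrefix y x.length ∨ ∃ m, ∃ i ≠ y m, ∃ t, x = rayPrefix y m ++ i :: t := by
  induction x using List.reverseRecOn with
  | nil => exact Or.inl rfl
  | append_singleton x j ih =>
    rcases ih with hx | ⟨m, i, hi, t, rfl⟩
    · by_cases hj : j = y x.length
      · left
        rw [List.length_append, List.length_singleton, rayPrefix_succ, ← hx, hj]
      · exact Or.inr ⟨x.length, j, hj, [], by rw [← hx]⟩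
    · exact Or.inr ⟨m, i, hi, t ++ [j], by simp⟩

theorem treeHarmAt_pow_rayLen_sub_one {x : List (Fin k)} (hx : x ≠ []) :
    treeHarmAt k (fun x => (k : ℝ) ^ rayLen y x - 1) x := by
  rcases eq_rayPrefix_or_exists_rayPrefix_append_cons y x with hray | ⟨m, i, hi, t, rfl⟩
  · obtain ⟨n, hn⟩ : ∃ n, x.length = n + 1 :=
      Nat.exists_eq_add_one.2 (List.length_pos_iff.2 hx)
    rw [hn] at hray
    subst hray
    refine (treeHarmAt_iff_of_apply_append_eq (y (n + 1)) fun j hj => ?_).2 ?_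
    · simp only [rayLen_rayPrefix_append_cons y hj, rayLen_rayPrefix]
    · simp only [← rayPrefix_succ, dropLast_rayPrefix_succ, rayLen_rayPrefix]
      ring
  · refine (treeHarmAt_iff_of_apply_append_eq i fun j _ => ?_).2 ?_ <;>
      simp only [List.append_assoc, List.cons_append, rayLen_rayPrefix_append_cons y hi,
        rayLen_dropLast_rayPrefix_append_cons y hi]
    ring

variable [NeZero k] {ψ : List (Fin k) → ℝ} (harm : ∀ x, x ≠ [] → treeHarmAt k ψ x)
  (hψ_nonneg : ∀ x, 0 ≤ ψ x) (hψ_le : ∀ x, ψ x ≤ (k : ℝ) ^ rayLen y x - 1)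
include harm hψ_nonneg hψ_le

theorem apply_rayPrefix_append_cons {m : ℕ} {i : Fin k} (hi : i ≠ y m) (t : List (Fin k)) :
    ψ (rayPrefix y m ++ i :: t) = ψ (rayPrefix y m) := by
  have hB (s : List (Fin k)) : |ψ (rayPrefix y m ++ [i] ++ s)| ≤ (k : ℝ) ^ m - 1 := by
    have := hψ_le (rayPrefix y m ++ i :: s)
    rw [rayLen_rayPrefix_append_cons y hi] at this
    rw [List.append_assoc, List.singleton_append]
    exact abs_le.2 ⟨by linarith [hψ_nonneg (rayPrefix y m ++ i :: s)], this⟩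
  simpa using apply_append_eq_apply_dropLast_of_treeHarmAt
    (fun s => harm _ (by simp)) hB t

theorem apply_rayPrefix_add_two (m : ℕ) :
    ψ (rayPrefix y (m + 2)) = (k + 1) * ψ (rayPrefix y (m + 1)) - k * ψ (rayPrefix y m) := by
  have hsibling (j : Fin k) (hj : j ≠ y (m + 1)) :
      ψ (rayPrefix y (m + 1) ++ [j]) = ψ (rayPrefix y (m + 1)) :=
    apply_rayPrefix_append_cons y harm hψ_nonneg hψ_le hj []
  have := (treeHarmAt_iff_of_apply_append_eq _ hsibling).1
    (harm _ (by simp [rayPrefix_succ]))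
  rwa [← rayPrefix_succ, dropLast_rayPrefix_succ] at this

end Ray

/-- Let `y∞` be an infinite ray in the `k`-ary tree and `φ(x) = k^{j(x)} − 1`, where
`j(x)` is the length of the longest common prefix of `x` and `y∞`. Then `φ` vanishes at
the root, is harmonic at every nonempty vertex, and is minimal: any nonnegative `ψ` with
`ψ(∅) = 0`, harmonic off `∅`, and `ψ ≤ φ` pointwise satisfies `ψ = c·φ` for some
`c ∈ [0,1]`. -/
theorem tree_ray_harmonic_minimal
    (k : ℕ) (hk : 2 ≤ k) (yinf : ℕ → Fin k) :
    ((fun x => ((k : ℝ) ^ rayLen yinf x - 1)) [] = 0) ∧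
    (∀ x : List (Fin k), x ≠ [] →
      treeHarmAt k (fun x => ((k : ℝ) ^ rayLen yinf x - 1)) x) ∧
    (∀ ψ : List (Fin k) → ℝ, (∀ x, 0 ≤ ψ x) → ψ [] = 0 →
      (∀ x, x ≠ [] → treeHarmAt k ψ x) →
      (∀ x, ψ x ≤ (k : ℝ) ^ rayLen yinf x - 1) →
      ∃ c ∈ Set.Icc (0 : ℝ) 1, ∀ x, ψ x = c * ((k : ℝ) ^ rayLen yinf x - 1)) := by
  have : NeZero k := ⟨by omega⟩
  refine ⟨by simp [show rayLen yinf [] = 0 from rayLen_rayPrefix yinf 0],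
    fun x => treeHarmAt_pow_rayLen_sub_one yinf, fun ψ hψ_nonneg hψ_root harm hψ_le => ?_⟩
  have hk1 : (0 : ℝ) < k - 1 := by
    have : (2 : ℝ) ≤ k := by exact_mod_cast hk
    linarith
  set c := ψ (rayPrefix yinf 1) / (k - 1)
  have hray (m : ℕ) : ψ (rayPrefix yinf m) = c * ((k : ℝ) ^ m - 1) := by
    have := sub_one_mul_eq_of_recurrence (a := fun m => ψ (rayPrefix yinf m)) hψ_root
      (apply_rayPrefix_add_two yinf harm hψ_nonneg hψ_le) m
    rw [div_mul_eq_mul_div, eq_div_iff hk1.ne']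
    linarith
  have hψ₁ : ψ (rayPrefix yinf 1) ≤ k - 1 := by
    simpa [rayLen_rayPrefix] using hψ_le (rayPrefix yinf 1)
  refine ⟨c, ⟨div_nonneg (hψ_nonneg _) hk1.le, (div_le_one hk1).2 hψ₁⟩, fun x => ?_⟩
  rcases eq_rayPrefix_or_exists_rayPrefix_append_cons yinf x with hx | ⟨m, i, hi, t, rfl⟩
  · rw [hx, hray, rayLen_rayPrefix]
  · rw [apply_rayPrefix_append_cons yinf harm hψ_nonneg hψ_le hi, hray,
      rayLen_rayPrefix_append_cons yinf hi]
end

section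
/- Let (X_n) be an irreducible recurrent Markov chain and x0 ∈ E. Suppose φ ≥ 0 vanishes at x0 and is harmonic off x0, and define ψ_r(x) = (r/(1−r))·E_{x0}[φ(X_1)] + φ(x) for r ∈ (0,1). Then the kernel q^r_{x,y} = (ψ_r(y)/ψ_r(x))·p_{x,y}·r^{1_{x = x0}} defines transition probabilities of a Markov chain, i.e. Σ_y q^r_{x,y} = 1 for every x with ψ_r(x) > 0. -/
open MeasureTheory ENNReal
open scoped Classical NNReal

/-- Doob-type transform: with `φ ≥ 0` vanishing at `x0` and harmonic off `x0`, and
`ψ_r(x) = (r/(1−r))·E_{x0}[φ(X_1)] + φ(x)`, the kernel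
`q^r_{x,y} = (ψ_r(y)/ψ_r(x))·p_{x,y}·r^{1_{x = x0}}` is a transition kernel: its rows sum
to `1` at every `x` with `ψ_r(x) > 0`. -/
theorem doob_transform_kernel_rows_sum_to_one
    {E : Type*} [Countable E] [MeasurableSpace E]
    (M : MC E) (hirr : M.Irreducible) (hrec : M.Recurrent)
    (hfin : ∀ x : E, {y | M.p x y ≠ 0}.Finite)
    (x0 : E) (φ : E → ℝ≥0∞) (hφfin : ∀ x, φ x ≠ ⊤) (hφ0 : φ x0 = 0)
    (hharm : ∀ x : E, x ≠ x0 → ∑' y, M.p x y * φ y = φ x)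
    (hKpos : 0 < ∑' y, M.p x0 y * φ y) (hKfin : (∑' y, M.p x0 y * φ y) ≠ ⊤)
    (r : ℝ≥0∞) (hr0 : 0 < r) (hr1 : r < 1) :
    ∀ x : E,
      0 < (r / (1 - r) * ∑' y, M.p x0 y * φ y + φ x) →
      ∑' y : E,
        ((r / (1 - r) * ∑' z, M.p x0 z * φ z + φ y)
            / (r / (1 - r) * ∑' z, M.p x0 z * φ z + φ x))
          * M.p x y * (if x = x0 then r else 1) = 1 := by
  intro x hx
  set K := ∑' z, M.p x0 z * φ z with hK
  set c := r / (1 - r) with hc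
  have hrtop : r ≠ ⊤ := (hr1.trans_le le_top).ne
  have h1r0 : (1 : ℝ≥0∞) - r ≠ 0 := by
    simp [tsub_eq_zero_iff_le, not_le, hr1]
  have h1rtop : (1 : ℝ≥0∞) - r ≠ ⊤ := by
    exact (tsub_le_self.trans_lt (by norm_num : (1:ℝ≥0∞) < ⊤)).ne
  have hc0 : c ≠ 0 := by
    rw [hc]
    exact (ENNReal.div_pos hr0.ne' h1rtop).ne'
  have hctop : c ≠ ⊤ := (ENNReal.div_lt_top hrtop h1r0).ne
  have hψtop : ∀ y, c * K + φ y ≠ ⊤ := fun y =>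
    ENNReal.add_ne_top.2 ⟨ENNReal.mul_ne_top hctop hKfin, hφfin y⟩
  have hψx0 : (c * K + φ x) ≠ 0 := hx.ne'
  -- the row sum of ψ·p
  have hsum : ∑' y, (c * K + φ y) * M.p x y
      = c * K + (if x = x0 then K else φ x) := by
    have h1 : ∑' y, (c * K + φ y) * M.p x y
        = ∑' y, (c * K * M.p x y + M.p x y * φ y) := by
      apply tsum_congr; intro y; ring
    rw [h1, ENNReal.tsum_add, ENNReal.tsum_mul_left, M.stochastic, mul_one]
    congr 1
    by_cases hxx : x = x0
    · simp [hxx, hK]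
    · simp [hxx, hharm x hxx]
  have hmain : ∑' y : E,
      ((c * K + φ y) / (c * K + φ x)) * M.p x y * (if x = x0 then r else 1)
      = (c * K + (if x = x0 then K else φ x)) * (c * K + φ x)⁻¹
          * (if x = x0 then r else 1) := by
    rw [← hsum]
    rw [← ENNReal.tsum_mul_right, ← ENNReal.tsum_mul_right]
    apply tsum_congr; intro y
    rw [div_eq_mul_inv]; ring
  rw [hmain]
  by_cases hxx : x = x0
  · subst hxx
    simp only [if_pos rfl, hφ0, add_zero]
    have hK0 : K ≠ 0 := hKpos.ne'
    have hcK : c * K ≠ 0 := mul_ne_zero hc0 hK0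
    have hcKtop : c * K ≠ ⊤ := ENNReal.mul_ne_top hctop hKfin
    -- (cK + K) * (cK)⁻¹ * r = 1
    have hcr : c * r + r = c := by
      have h1 : c * (1 - r) = r := by
        rw [hc]; exact ENNReal.div_mul_cancel h1r0 h1rtop
      have h2 : c - c * r = r := by
        have h3 : c * ((1:ℝ≥0∞) - r) = c * 1 - c * r :=
          ENNReal.mul_sub (fun _ _ => hctop)
        rw [mul_one] at h3
        rw [← h3, h1]
      have hle : c * r ≤ c := by
        calc c * r ≤ c * 1 := mul_le_mul_right hr1.le c
        _ = c := mul_one c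
      nth_rewrite 2 [← h2]
      exact add_tsub_cancel_of_le hle
    calc (c * K + K) * (c * K)⁻¹ * r
        = ((c + 1) * K) * (K⁻¹ * c⁻¹) * r := by
          rw [ENNReal.mul_inv (Or.inl hc0) (Or.inl hctop)]; ring
      _ = (c + 1) * (K * K⁻¹) * c⁻¹ * r := by ring
      _ = (c + 1) * c⁻¹ * r := by rw [ENNReal.mul_inv_cancel hK0 hKfin]; ring
      _ = ((c + 1) * r) * c⁻¹ := by ring
      _ = c * c⁻¹ := by rw [add_mul, one_mul, hcr]
      _ = 1 := ENNReal.mul_inv_cancel hc0 hctop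
  · simp only [if_neg hxx]
    rw [mul_one, ENNReal.mul_inv_cancel hψx0 (hψtop x)]
end
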